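/- arXiv:2104.13753 — 2 statements merged into one kernel-verified Lean document; each statement's English description precedes it below -/
import Mathlib

section
/- Let μ be a nonzero finite Borel measure on ℝ^d with compact support and λ ≥ 0. Then the minimizer u_{μ,λ} of J_{μ,λ} is μ-regular. -/
open MeasureTheory Filter Topology ProbabilityTheory
open scoped ENNReal NNReal symmDiff Classical RealInnerProductSpace

noncomputable section

/-- `d`-dimensional Euclidean space. -/
abbrev Euc (d : ℕ) : Type := EuclideanSpace ℝ (Fin d)

/-- The sum-of-norms clustering functional
`J_{μ,λ}(u) = ∫ |u x - x|² dμ + λ ∬ |u x - u y| dμ dμ`. -/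
def SONJ {d : ℕ} (μ : Measure (Euc d)) (lam : ℝ) (u : Euc d → Euc d) : ℝ :=
  ∫ x, ‖u x - x‖ ^ 2 ∂μ + lam * ∫ x, ∫ y, ‖u x - u y‖ ∂μ ∂μ

/-- `u` is a minimizer of `J_{μ,λ}` over `L²(μ; ℝ^d)`.  Since `J_{μ,λ}` has a unique
minimizer (up to `μ`-a.e. equality), this predicate characterizes `u_{μ,λ}`. -/
def IsSONMin {d : ℕ} (μ : Measure (Euc d)) (lam : ℝ) (u : Euc d → Euc d) : Prop :=
  MemLp u 2 μ ∧ ∀ v : Euc d → Euc d, MemLp v 2 μ → SONJ μ lam u ≤ SONJ μ lam v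

/-- `μ` is `λ`-cohesive: the minimizer of `J_{μ,λ}` is `μ`-a.e. constant. -/
def Cohesive {d : ℕ} (μ : Measure (Euc d)) (lam : ℝ) : Prop :=
  ∃ u : Euc d → Euc d, IsSONMin μ lam u ∧ ∃ c : Euc d, u =ᵐ[μ] fun _ => c

/-- `μ` is `λ`-shattered: the minimizer of `J_{μ,λ}` agrees `μ`-a.e. with a measurable
injection. -/
def Shattered {d : ℕ} (μ : Measure (Euc d)) (lam : ℝ) : Prop :=
  ∃ u : Euc d → Euc d, IsSONMin μ lam u ∧
    ∃ v : Euc d → Euc d, Measurable v ∧ Function.Injective v ∧ u =ᵐ[μ] v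

/-- `λ₁(μ) = inf {λ ≥ 0 | μ is λ-cohesive}`. -/
def lambda1 {d : ℕ} (μ : Measure (Euc d)) : ℝ :=
  sInf {lam : ℝ | 0 ≤ lam ∧ Cohesive μ lam}

/-- `λ⋆(μ) = sup {λ ≥ 0 | μ is λ-shattered}`. -/
def lambdaStar {d : ℕ} (μ : Measure (Euc d)) : ℝ :=
  sSup {lam : ℝ | 0 ≤ lam ∧ Shattered μ lam}

/-- The level set (cluster) of `u` containing `x`: `V_{u,x} = u⁻¹({u x})`. -/
def Vset {d : ℕ} (u : Euc d → Euc d) (x : Euc d) : Set (Euc d) := {y | u y = u x}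

/-- The `μ`-centroid of a set `V`: the `μ`-average of `V` if `μ V > 0`, and the unique
element of `V` if `V` is a singleton (otherwise junk). -/
def muCentroid {d : ℕ} (μ : Measure (Euc d)) (V : Set (Euc d)) : Euc d :=
  if 0 < μ V then (μ V).toReal⁻¹ • ∫ x in V, x ∂μ
  else if h : ∃ x, V = {x} then h.choose else 0

/-- The first canonical basis vector of `ℝ^d`. -/
def e1 (d : ℕ) : Euc d := if h : 0 < d then EuclideanSpace.single (⟨0, h⟩ : Fin d) 1 else 0

/-- The constant `γ_d` from the paper. -/
def gammaD (d : ℕ) : ℝ :=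
  ((2 * (d : ℝ) + 1) / (2 * (d : ℝ) + 4)) *
    (if Even d then
      (((d : ℝ) + 1) * ((Nat.factorial (2 * d) : ℝ)) * Real.pi) /
        (2 ^ (3 * d) * ((Nat.factorial (d / 2) : ℝ)) ^ 2 * ((Nat.factorial d : ℝ)))
    else
      (((d : ℝ) + 1) * ((Nat.factorial ((d - 1) / 2) : ℝ)) ^ 2 *
          ((Nat.factorial (2 * d) : ℝ))) /
        (2 ^ d * ((Nat.factorial d : ℝ)) ^ 3))

/-- The union of the two open unit balls centered at `± r e₁`. -/
def ballUnion (d : ℕ) (r : ℝ) : Set (Euc d) :=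
  Metric.ball (-(r • e1 d)) 1 ∪ Metric.ball (r • e1 d) 1

/-- The empirical measure `μ_N = N⁻¹ ∑_{n<N} δ_{X n ω}`. -/
def empMeas {d : ℕ} {Ω : Type*} (X : ℕ → Ω → Euc d) (N : ℕ) (ω : Ω) : Measure (Euc d) :=
  (N : ℝ≥0∞)⁻¹ • ∑ n ∈ Finset.range N, Measure.dirac (X n ω)

/-!
Fix a measurable representative `w` of `u`, and write `m x = μ(V_{w,x})` (`clusterMass`) and
`F x = ∫ (w x - w y) / |w x - w y| dμ(y)` with `0 / 0 = 0` (`meanDirection`). Perturbing `w`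
by `t φ` with `|φ| ≤ 1` and letting `t → 0⁺`, pairs in different clusters contribute `λ F` to the
derivative and pairs in the same cluster at most `λ m |φ|`, so
`∫ ⟪x - w x - λ F x, φ x⟫ ≤ λ ∫ m |φ|`; by duality `|x - w x - λ F x| ≤ λ m x` almost everywhere.
Hence each cluster (restricted to a conull set) lies in the closed ball of radius `λ m x` around
`w x + λ F x`, and so does its centroid; a cluster of mass zero is a single point. Finally `F` is
strictly monotone, `⟪F x - F z, w x - w z⟫ ≥ (m x + m z) |w x - w z|`, which makes the balls of
two different clusters disjoint, so their centroids differ.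
-/

open NormedSpace Metric

section InnerProductSpace

variable {E : Type*} [NormedAddCommGroup E] [InnerProductSpace ℝ E]

lemma norm_normalize_le (x : E) : ‖normalize x‖ ≤ 1 := by
  rcases eq_or_ne x 0 with rfl | hx
  · simp
  · exact (norm_normalize hx).le

lemma inner_normalize_self (x : E) : ⟪normalize x, x⟫ = ‖x‖ := by
  rcases eq_or_ne x 0 with rfl | hx
  · simp
  · rw [NormedSpace.normalize, real_inner_smul_left, real_inner_self_eq_norm_sq, sq,
      inv_mul_cancel_left₀ (norm_ne_zero_iff.mpr hx)]

lemma inner_normalize_le_norm (x y : E) : ⟪normalize x, y⟫ ≤ ‖y‖ :=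
  (real_inner_le_norm _ _).trans (mul_le_of_le_one_left (norm_nonneg y) (norm_normalize_le x))

/-- Monotonicity of `normalize`, with a gain of `‖a - b‖` for each of `a`, `b` that vanishes. -/
lemma mul_norm_sub_le_inner_normalize_sub [DecidableEq E] (a b : E) :
    ((if a = 0 then 1 else 0) + (if b = 0 then 1 else 0)) * ‖a - b‖ ≤
      ⟪normalize a - normalize b, a - b⟫ := by
  rcases eq_or_ne a 0 with rfl | ha
  · rcases eq_or_ne b 0 with rfl | hb
    · simp
    · simp [hb, inner_normalize_self]
  rcases eq_or_ne b 0 with rfl | hb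
  · simp [ha, inner_normalize_self]
  simp only [ha, hb, if_false, add_zero, zero_mul, inner_sub_left, inner_sub_right,
    inner_normalize_self]
  linarith [inner_normalize_le_norm a b, inner_normalize_le_norm b a]

lemma abs_norm_add_smul_sub_div_le (a b : E) {t : ℝ} (ht : 0 < t) :
    |(‖a + t • b‖ - ‖a‖) / t| ≤ ‖b‖ := by
  rw [abs_div, abs_of_pos ht, div_le_iff₀ ht]
  calc |‖a + t • b‖ - ‖a‖| ≤ ‖t • b‖ := by simpa using abs_norm_sub_norm_le (a + t • b) a
    _ = ‖b‖ * t := by rw [norm_smul, Real.norm_of_nonneg ht.le, mul_comm]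

lemma tendsto_norm_add_smul_sub_div [DecidableEq E] (a b : E) :
    Tendsto (fun t : ℝ => (‖a + t • b‖ - ‖a‖) / t) (𝓝[>] 0)
      (𝓝 (⟪normalize a, b⟫ + if a = 0 then ‖b‖ else 0)) := by
  rcases eq_or_ne a 0 with rfl | ha
  · refine tendsto_const_nhds.congr' (eventually_nhdsWithin_of_forall fun t (ht : 0 < t) => ?_)
    simp [norm_smul, abs_of_pos ht, ht.ne']
  have hderiv : HasDerivAt (fun t : ℝ => ‖a + t • b‖) ⟪normalize a, b⟫ 0 := by
    have hsq : HasDerivAt (fun t : ℝ => ‖a + t • b‖ ^ 2) (2 * ⟪a, b⟫) 0 := by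
      simpa using (((hasDerivAt_id (0 : ℝ)).smul_const b).const_add a).norm_sq
    convert hsq.sqrt (by simpa using ha) using 1
    · ext t
      rw [Real.sqrt_sq (norm_nonneg _)]
    · rw [NormedSpace.normalize, real_inner_smul_left]
      simp only [zero_smul, add_zero, Real.sqrt_sq (norm_nonneg _)]
      field_simp
  simpa [ha, div_eq_inv_mul] using hderiv.tendsto_slope_zero_right

lemma inner_sub_le_of_mem_closedBall {C c c' v : E} {r r' : ℝ} (hC : C ∈ closedBall c r)
    (hC' : C ∈ closedBall c' r') : ⟪c - c', v⟫ ≤ (r + r') * ‖v‖ := by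
  rw [mem_closedBall, dist_eq_norm] at hC hC'
  calc ⟪c - c', v⟫ = ⟪C - c', v⟫ - ⟪C - c, v⟫ := by
        rw [← inner_sub_left, sub_sub_sub_cancel_left]
    _ ≤ ‖C - c'‖ * ‖v‖ + ‖C - c‖ * ‖v‖ := by
        linarith [real_inner_le_norm (C - c') v,
          neg_le_of_abs_le (abs_real_inner_le_norm (C - c) v)]
    _ ≤ (r + r') * ‖v‖ := by nlinarith [norm_nonneg v]

end InnerProductSpace

section Integration

variable {α E : Type*} [MeasurableSpace α] [NormedAddCommGroup E] [InnerProductSpace ℝ E]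
  {μ : Measure α}

lemma integral_add_comp_swap [SFinite μ] {f : α × α → ℝ} (hf : Integrable f (μ.prod μ)) :
    ∫ p, (f p + f p.swap) ∂μ.prod μ = 2 * ∫ p, f p ∂μ.prod μ := by
  rw [integral_add hf (hf.swap : Integrable (fun p => f p.swap) _), two_mul,
    integral_prod_swap f]

lemma MeasureTheory.Integrable.inner_of_norm_le_one {H φ : α → E} (hH : Integrable H μ)
    (hφ : AEStronglyMeasurable φ μ) (hφ1 : ∀ x, ‖φ x‖ ≤ 1) :
    Integrable (fun x => ⟪H x, φ x⟫) μ :=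
  hH.norm.mono' (hH.aestronglyMeasurable.inner hφ) <| Eventually.of_forall fun x =>
    (norm_inner_le_norm _ _).trans (mul_le_of_le_one_right (norm_nonneg _) (hφ1 x))

lemma MeasureTheory.Integrable.mul_norm_of_norm_le_one {F : Type*} [NormedAddCommGroup F]
    {g : α → ℝ} {φ : α → F} (hg : Integrable g μ) (hφ : AEStronglyMeasurable φ μ)
    (hφ1 : ∀ x, ‖φ x‖ ≤ 1) : Integrable (fun x => g x * ‖φ x‖) μ :=
  hg.norm.mono' (hg.aestronglyMeasurable.mul hφ.norm) <| Eventually.of_forall fun x => by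
    rw [norm_mul, norm_norm]
    exact mul_le_of_le_one_right (norm_nonneg _) (hφ1 x)

lemma integral_norm_add_smul_sq [IsFiniteMeasure μ] {f φ : α → E} (hf : MemLp f 2 μ)
    (hφ : AEStronglyMeasurable φ μ) (hφ1 : ∀ x, ‖φ x‖ ≤ 1) (t : ℝ) :
    ∫ x, ‖f x + t • φ x‖ ^ 2 ∂μ =
      ∫ x, ‖f x‖ ^ 2 ∂μ + (2 * t * ∫ x, ⟪f x, φ x⟫ ∂μ + t ^ 2 * ∫ x, ‖φ x‖ ^ 2 ∂μ) := by
  have hinner : Integrable (fun x => ⟪f x, φ x⟫) μ :=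
    (hf.integrable one_le_two).inner_of_norm_le_one hφ hφ1
  have hφsq : Integrable (fun x => ‖φ x‖ ^ 2) μ :=
    .of_bound (hφ.norm.pow 2) 1 (Eventually.of_forall fun x => by
      rw [Real.norm_eq_abs, abs_pow, abs_norm]
      exact pow_le_one₀ (norm_nonneg _) (hφ1 x))
  have hlin : Integrable (fun x => 2 * t * ⟪f x, φ x⟫ + t ^ 2 * ‖φ x‖ ^ 2) μ :=
    (hinner.const_mul _).add (hφsq.const_mul _)
  have hpt : ∀ x, ‖f x + t • φ x‖ ^ 2 =
      ‖f x‖ ^ 2 + (2 * t * ⟪f x, φ x⟫ + t ^ 2 * ‖φ x‖ ^ 2) := fun x => by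
    rw [norm_add_sq_real, real_inner_smul_right, norm_smul, Real.norm_eq_abs, mul_pow, sq_abs]
    ring
  simp_rw [hpt]
  rw [integral_add hf.norm.integrable_sq hlin, integral_add (hinner.const_mul _)
    (hφsq.const_mul _), integral_const_mul, integral_const_mul]

lemma tendsto_integral_norm_add_smul_sub_div [DecidableEq E] {f g : α → E}
    (hf : AEStronglyMeasurable f μ) (hg : Integrable g μ) :
    Tendsto (fun t : ℝ => ∫ a, (‖f a + t • g a‖ - ‖f a‖) / t ∂μ) (𝓝[>] 0)
      (𝓝 (∫ a, (⟪normalize (f a), g a⟫ + if f a = 0 then ‖g a‖ else 0) ∂μ)) :=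
  tendsto_integral_filter_of_dominated_convergence (fun a => ‖g a‖)
    (Eventually.of_forall fun t => by have := hg.aestronglyMeasurable; fun_prop)
    (eventually_nhdsWithin_of_forall fun _ ht => Eventually.of_forall fun _ => by
      rw [Real.norm_eq_abs]
      exact abs_norm_add_smul_sub_div_le _ _ ht)
    hg.norm (Eventually.of_forall fun _ => tendsto_norm_add_smul_sub_div _ _)

/-- Duality: test against the unit vector field `normalize (H x)` on `{g < ‖H‖}`. -/
lemma ae_norm_le_of_integral_inner_le {H : α → E} {g : α → ℝ} (hH : Integrable H μ)
    (hHm : StronglyMeasurable H) (hg : Integrable g μ) (hgm : StronglyMeasurable g)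
    (hg0 : ∀ x, 0 ≤ g x)
    (h : ∀ φ : α → E, StronglyMeasurable φ → (∀ x, ‖φ x‖ ≤ 1) →
      ∫ x, ⟪H x, φ x⟫ ∂μ ≤ ∫ x, g x * ‖φ x‖ ∂μ) :
    ∀ᵐ x ∂μ, ‖H x‖ ≤ g x := by
  set S := {x | g x < ‖H x‖}
  have hS : MeasurableSet S := measurableSet_lt hgm.measurable hHm.norm.measurable
  set φ := S.indicator fun x => normalize (H x)
  have hφm : StronglyMeasurable φ :=
    ((hHm.norm.measurable.inv).stronglyMeasurable.smul hHm).indicator hS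
  have hφ1 : ∀ x, ‖φ x‖ ≤ 1 := fun x => by
    by_cases hx : x ∈ S <;> simp [φ, hx, norm_normalize_le]
  have hgap : ∀ x, S.indicator (fun x => ‖H x‖ - g x) x = ⟪H x, φ x⟫ - g x * ‖φ x‖ := by
    intro x
    by_cases hx : x ∈ S
    · have hH0 : H x ≠ 0 := fun h0 => by simp [S, h0] at hx; linarith [hg0 x]
      have hφx : φ x = normalize (H x) := Set.indicator_of_mem hx _
      rw [Set.indicator_of_mem hx, hφx, real_inner_comm, inner_normalize_self,
        norm_normalize hH0, mul_one]
    · simp [φ, hx]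
  have hnonneg : 0 ≤ S.indicator fun x => ‖H x‖ - g x :=
    Set.indicator_nonneg fun x hx => sub_nonneg.mpr (le_of_lt hx)
  have hzero : ∫ x, S.indicator (fun x => ‖H x‖ - g x) x ∂μ = 0 := by
    refine le_antisymm ?_ (integral_nonneg hnonneg)
    simp_rw [hgap]
    rw [integral_sub (hH.inner_of_norm_le_one hφm.aestronglyMeasurable hφ1)
      (hg.mul_norm_of_norm_le_one hφm.aestronglyMeasurable hφ1)]
    exact sub_nonpos.mpr (h φ hφm hφ1)
  filter_upwards [(integral_eq_zero_iff_of_nonneg hnonneg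
    ((hH.norm.sub hg).indicator hS)).mp hzero] with x hx
  by_contra hlt
  have hxS : x ∈ S := not_le.mp hlt
  simp only [Set.indicator_of_mem hxS, Pi.zero_apply, sub_eq_zero] at hx
  exact hlt hx.le

end Integration

lemma memLp_id_of_isCompact {X : Type*} [NormedAddCommGroup X] [MeasurableSpace X]
    [OpensMeasurableSpace X] [SecondCountableTopology X] {μ : Measure X} [IsFiniteMeasure μ]
    {K : Set X} (hK : IsCompact K) (hKc : μ Kᶜ = 0) (p : ℝ≥0∞) : MemLp (fun x => x) p μ := by
  obtain ⟨r, hr⟩ := hK.isBounded.subset_closedBall 0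
  refine .of_bound aestronglyMeasurable_id r
    ((show ∀ᵐ x ∂μ, x ∈ K from mem_ae_iff.mpr hKc).mono fun x hx => ?_)
  simpa using hr hx

lemma measurable_normalize {X : Type*} [NormedAddCommGroup X] [NormedSpace ℝ X]
    [MeasurableSpace X] [BorelSpace X] [SecondCountableTopology X] :
    Measurable (normalize : X → X) :=
  measurable_norm.inv.smul measurable_id

section Clusters

variable {d : ℕ} {μ : Measure (Euc d)} {lam : ℝ} {w : Euc d → Euc d}

lemma measurableSet_Vset (hw : Measurable w) (x : Euc d) : MeasurableSet (Vset w x) :=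
  hw (measurableSet_singleton _)

def clusterMass (μ : Measure (Euc d)) (w : Euc d → Euc d) (x : Euc d) : ℝ :=
  μ.real (Vset w x)

def meanDirection (μ : Measure (Euc d)) (w : Euc d → Euc d) (x : Euc d) : Euc d :=
  ∫ y, normalize (w x - w y) ∂μ

lemma clusterMass_nonneg (x : Euc d) : 0 ≤ clusterMass μ w x := measureReal_nonneg

lemma clusterMass_congr {x x' : Euc d} (h : w x = w x') :
    clusterMass μ w x = clusterMass μ w x' := by
  simp only [clusterMass, Vset, h]

lemma meanDirection_congr {x x' : Euc d} (h : w x = w x') :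
    meanDirection μ w x = meanDirection μ w x' := by
  simp only [meanDirection, h]

lemma SONJ_congr_ae {u v : Euc d → Euc d} (h : u =ᵐ[μ] v) : SONJ μ lam u = SONJ μ lam v := by
  have hsq : ∫ x, ‖u x - x‖ ^ 2 ∂μ = ∫ x, ‖v x - x‖ ^ 2 ∂μ :=
    integral_congr_ae (h.mono fun x hx => by simp only [hx])
  have hpair : ∫ x, ∫ y, ‖u x - u y‖ ∂μ ∂μ = ∫ x, ∫ y, ‖v x - v y‖ ∂μ ∂μ :=
    integral_congr_ae (h.mono fun x hx => integral_congr_ae (h.mono fun y hy => by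
      simp only [hx, hy]))
  rw [SONJ, SONJ, hsq, hpair]

lemma IsSONMin.congr_ae {u v : Euc d → Euc d} (hu : IsSONMin μ lam u) (h : u =ᵐ[μ] v) :
    IsSONMin μ lam v :=
  ⟨hu.1.ae_eq h, fun f hf => (SONJ_congr_ae h).symm.trans_le (hu.2 f hf)⟩

lemma Vset_inter_eq_of_eqOn {u : Euc d → Euc d} {A : Set (Euc d)} (h : Set.EqOn u w A)
    {x : Euc d} (hx : x ∈ A) : Vset u x ∩ A = Vset w x ∩ A := by
  ext y
  simp only [Set.mem_inter_iff]
  constructor <;> rintro ⟨hy, hyA⟩ <;> refine ⟨?_, hyA⟩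
  · exact (h hyA).symm.trans (hy.trans (h hx))
  · exact (h hyA).trans (hy.trans (h hx).symm)

lemma Vset_inter_subset_closedBall {A : Set (Euc d)}
    (hA : ∀ y ∈ A, y ∈ closedBall (w y + lam • meanDirection μ w y) (lam * clusterMass μ w y))
    (x : Euc d) :
    Vset w x ∩ A ⊆ closedBall (w x + lam • meanDirection μ w x) (lam * clusterMass μ w x) :=
  fun y ⟨(hy : w y = w x), hyA⟩ => by
    simpa only [meanDirection_congr hy, clusterMass_congr hy, hy] using hA y hyA

/-- A cluster of mass zero sits in a ball of radius zero. -/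
lemma Vset_inter_eq_singleton_or_measure_pos {A : Set (Euc d)} (hAc : μ Aᶜ = 0)
    (hA : ∀ y ∈ A, y ∈ closedBall (w y + lam • meanDirection μ w y) (lam * clusterMass μ w y))
    {x : Euc d} (hx : x ∈ A) : (∃ y, Vset w x ∩ A = {y}) ∨ 0 < μ (Vset w x ∩ A) := by
  rcases (clusterMass_nonneg (μ := μ) (w := w) x).eq_or_lt with h0 | hpos
  · refine Or.inl ⟨x, Set.eq_singleton_iff_unique_mem.mpr ⟨⟨rfl, hx⟩, fun y hy => ?_⟩⟩
    have hxy := Vset_inter_subset_closedBall hA x hy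
    have hxx := Vset_inter_subset_closedBall hA x ⟨rfl, hx⟩
    rw [← h0, mul_zero, closedBall_zero] at hxy hxx
    exact hxy.trans hxx.symm
  · rw [measure_inter_conull' (measure_mono_null (fun y hy => hy.2) hAc)]
    exact Or.inr (ENNReal.toReal_pos_iff.mp hpos).1

variable [IsFiniteMeasure μ]

lemma clusterMass_le (x : Euc d) : clusterMass μ w x ≤ μ.real Set.univ :=
  measureReal_mono (Set.subset_univ _)

lemma measurable_clusterMass (hw : Measurable w) : Measurable (clusterMass μ w) :=
  (measurable_measure_prodMk_left (ν := μ)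
    (measurableSet_eq_fun (hw.comp measurable_snd) (hw.comp measurable_fst))).ennreal_toReal

lemma integrable_clusterMass (hw : Measurable w) : Integrable (clusterMass μ w) μ :=
  .of_bound (measurable_clusterMass hw).aestronglyMeasurable _
    (Eventually.of_forall fun x => by
      rw [Real.norm_of_nonneg (clusterMass_nonneg x)]
      exact clusterMass_le x)

lemma integrable_normalize_sub (hw : Measurable w) (x : Euc d) :
    Integrable (fun y => normalize (w x - w y)) μ :=
  .of_bound (measurable_normalize.comp (measurable_const.sub hw)).aestronglyMeasurable 1
    (Eventually.of_forall fun _ => norm_normalize_le _)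

lemma measurable_meanDirection (hw : Measurable w) : Measurable (meanDirection μ w) :=
  (measurable_normalize.comp ((hw.comp measurable_fst).sub
    (hw.comp measurable_snd))).stronglyMeasurable.integral_prod_right'.measurable

lemma norm_meanDirection_le (x : Euc d) : ‖meanDirection μ w x‖ ≤ μ.real Set.univ :=
  (norm_integral_le_of_norm_le_const
    (Eventually.of_forall fun y => norm_normalize_le (w x - w y))).trans_eq (one_mul _)

lemma integrable_meanDirection (hw : Measurable w) : Integrable (meanDirection μ w) μ :=
  .of_bound (measurable_meanDirection hw).aestronglyMeasurable _
    (Eventually.of_forall norm_meanDirection_le)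

/-- Every point of either cluster contributes the full `‖w x - w z‖`. -/
lemma clusterMass_add_mul_norm_le_inner_meanDirection_sub (hw : Measurable w) (x z : Euc d) :
    (clusterMass μ w x + clusterMass μ w z) * ‖w x - w z‖ ≤
      ⟪meanDirection μ w x - meanDirection μ w z, w x - w z⟫ := by
  have hVx := measurableSet_Vset hw x
  have hVz := measurableSet_Vset hw z
  have hpt : ∀ y, ((Vset w x).indicator 1 y + (Vset w z).indicator 1 y) * ‖w x - w z‖ ≤
      ⟪normalize (w x - w y) - normalize (w z - w y), w x - w z⟫ := fun y => by
    have := mul_norm_sub_le_inner_normalize_sub (w x - w y) (w z - w y)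
    simp only [sub_sub_sub_cancel_right, sub_eq_zero] at this
    convert this using 3 <;> simp [Set.indicator_apply, Vset, eq_comm]
  have hint : Integrable (fun y => normalize (w x - w y) - normalize (w z - w y)) μ :=
    (integrable_normalize_sub hw x).sub (integrable_normalize_sub hw z)
  calc (clusterMass μ w x + clusterMass μ w z) * ‖w x - w z‖
      = ∫ y, ((Vset w x).indicator 1 y + (Vset w z).indicator 1 y) * ‖w x - w z‖ ∂μ := by
        rw [integral_mul_const, integral_add ((integrable_const _).indicator hVx)
          ((integrable_const _).indicator hVz), integral_indicator_one hVx,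
          integral_indicator_one hVz, clusterMass, clusterMass]
    _ ≤ ∫ y, ⟪normalize (w x - w y) - normalize (w z - w y), w x - w z⟫ ∂μ :=
        integral_mono ((((integrable_const _).indicator hVx).add
          ((integrable_const _).indicator hVz)).mul_const _) (hint.inner_const _) hpt
    _ = ⟪meanDirection μ w x - meanDirection μ w z, w x - w z⟫ := by
        simp_rw [real_inner_comm (w x - w z)]
        rw [integral_inner hint, meanDirection, meanDirection, integral_sub
          (integrable_normalize_sub hw x) (integrable_normalize_sub hw z)]

lemma disjoint_closedBall_of_ne (hlam : 0 ≤ lam) (hw : Measurable w) {x z : Euc d}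
    (hne : w x ≠ w z) :
    Disjoint (closedBall (w x + lam • meanDirection μ w x) (lam * clusterMass μ w x))
      (closedBall (w z + lam • meanDirection μ w z) (lam * clusterMass μ w z)) := by
  refine Set.disjoint_left.mpr fun C hCx hCz => ?_
  have hball := inner_sub_le_of_mem_closedBall hCx hCz (v := w x - w z)
  have hmono := mul_le_mul_of_nonneg_left
    (clusterMass_add_mul_norm_le_inner_meanDirection_sub (μ := μ) hw x z) hlam
  have hcenter : ⟪(w x + lam • meanDirection μ w x) - (w z + lam • meanDirection μ w z),
      w x - w z⟫ = ‖w x - w z‖ ^ 2 +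
        lam * ⟪meanDirection μ w x - meanDirection μ w z, w x - w z⟫ := by
    rw [show (w x + lam • meanDirection μ w x) - (w z + lam • meanDirection μ w z) =
      (w x - w z) + lam • (meanDirection μ w x - meanDirection μ w z) by rw [smul_sub]; abel,
      inner_add_left, real_inner_self_eq_norm_sq, real_inner_smul_left]
  have hpos : 0 < ‖w x - w z‖ ^ 2 := by positivity [sub_ne_zero.mpr hne]
  nlinarith

lemma muCentroid_mem_closedBall {V : Set (Euc d)} {c : Euc d} {r : ℝ}
    (hV : (∃ y, V = {y}) ∨ 0 < μ V) (hVm : MeasurableSet V) (hsub : V ⊆ closedBall c r) :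
    muCentroid μ V ∈ closedBall c r := by
  unfold muCentroid
  split_ifs with hpos hsing
  · have hbound : ∀ᵐ x ∂μ.restrict V, x ∈ closedBall c r :=
      (ae_restrict_iff' hVm).mpr (Eventually.of_forall hsub)
    rw [← measureReal_def, ← setAverage_eq]
    exact (convex_closedBall c r).set_average_mem isClosed_closedBall hpos.ne'
      (measure_ne_top _ _) hbound
      (Integrable.of_bound aestronglyMeasurable_id _
        (hbound.mono fun _ => norm_le_of_mem_closedBall))
  · exact hsub (Set.eq_singleton_iff_unique_mem.mp hsing.choose_spec).1
  · exact absurd (hV.resolve_right hpos) hsing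

end Clusters

section EulerLagrange

variable {d : ℕ} {μ : Measure (Euc d)} [IsFiniteMeasure μ] {lam : ℝ} {w : Euc d → Euc d}

lemma SONJ_eq_integral_prod {u : Euc d → Euc d} (hu : Integrable u μ) :
    SONJ μ lam u = ∫ x, ‖u x - x‖ ^ 2 ∂μ + lam * ∫ p, ‖u p.1 - u p.2‖ ∂μ.prod μ := by
  rw [SONJ, integral_integral (f := fun x y => ‖u x - u y‖)
    ((hu.comp_fst μ).sub (hu.comp_snd μ)).norm]

lemma SONJ_add_smul_sub_div {φ : Euc d → Euc d} (hw : MemLp w 2 μ)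
    (hid : MemLp (fun x => x) 2 μ) (hφ : AEStronglyMeasurable φ μ) (hφ1 : ∀ x, ‖φ x‖ ≤ 1)
    {t : ℝ} (ht : t ≠ 0) :
    (SONJ μ lam (fun x => w x + t • φ x) - SONJ μ lam w) / t =
      2 * ∫ x, ⟪w x - x, φ x⟫ ∂μ + t * ∫ x, ‖φ x‖ ^ 2 ∂μ +
        lam * ∫ p, (‖(w p.1 - w p.2) + t • (φ p.1 - φ p.2)‖ - ‖w p.1 - w p.2‖) / t ∂μ.prod μ := by
  have hw1 : Integrable w μ := hw.integrable one_le_two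
  have hv : Integrable (fun x => w x + t • φ x) μ :=
    hw1.add ((Integrable.of_bound hφ 1 (Eventually.of_forall hφ1)).smul t)
  have hpair : ∀ p : Euc d × Euc d, (w p.1 + t • φ p.1) - (w p.2 + t • φ p.2) =
      (w p.1 - w p.2) + t • (φ p.1 - φ p.2) := fun p => by
    rw [smul_sub]
    abel
  have hΔ : Integrable (fun p : Euc d × Euc d => ‖w p.1 - w p.2‖) (μ.prod μ) :=
    ((hw1.comp_fst μ).sub (hw1.comp_snd μ)).norm
  have hΔt : Integrable (fun p : Euc d × Euc d =>
      ‖(w p.1 - w p.2) + t • (φ p.1 - φ p.2)‖) (μ.prod μ) :=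
    ((hv.comp_fst μ).sub (hv.comp_snd μ)).norm.congr
      (Eventually.of_forall fun p => congrArg norm (hpair p))
  have hsecond : ∫ p, ‖(w p.1 + t • φ p.1) - (w p.2 + t • φ p.2)‖ ∂μ.prod μ -
      ∫ p, ‖w p.1 - w p.2‖ ∂μ.prod μ = t * ∫ p,
        (‖(w p.1 - w p.2) + t • (φ p.1 - φ p.2)‖ - ‖w p.1 - w p.2‖) / t ∂μ.prod μ := by
    simp_rw [hpair]
    rw [integral_div, mul_div_cancel₀ _ ht, integral_sub hΔt hΔ]
  have hfirst : ∫ x, ‖w x + t • φ x - x‖ ^ 2 ∂μ = ∫ x, ‖w x - x‖ ^ 2 ∂μ +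
      (2 * t * ∫ x, ⟪w x - x, φ x⟫ ∂μ + t ^ 2 * ∫ x, ‖φ x‖ ^ 2 ∂μ) := by
    simpa only [add_sub_right_comm] using
      integral_norm_add_smul_sq (f := fun x => w x - x) (hw.sub hid) hφ hφ1 t
  rw [SONJ_eq_integral_prod hv, SONJ_eq_integral_prod hw1, hfirst, div_eq_iff ht]
  linear_combination lam * hsecond

lemma integral_inner_normalize_sub_add_ite (hw : Measurable w) (x v : Euc d) (s : ℝ) :
    ∫ y, (⟪normalize (w x - w y), v⟫ + if w x - w y = 0 then s else 0) ∂μ =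
      ⟪meanDirection μ w x, v⟫ + clusterMass μ w x * s := by
  have hind : (fun y => if w x - w y = 0 then s else 0) = (Vset w x).indicator fun _ => s := by
    ext y
    simp [Set.indicator_apply, Vset, sub_eq_zero, eq_comm]
  rw [integral_add ((integrable_normalize_sub hw x).inner_const _)
    (hind ▸ (integrable_const _).indicator (measurableSet_Vset hw x)), hind,
    integral_indicator_const _ (measurableSet_Vset hw x), smul_eq_mul]
  simp_rw [real_inner_comm v]
  rw [integral_inner (integrable_normalize_sub hw x), meanDirection, clusterMass]

lemma integrable_inner_normalize_add_ite {β : Type*} [MeasurableSpace β] {ν : Measure β}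
    [IsFiniteMeasure ν] {f g : β → Euc d} (hf : Measurable f) (hg : Measurable g) {C : ℝ}
    (hgC : ∀ p, ‖g p‖ ≤ C) :
    Integrable (fun p => ⟪normalize (f p), g p⟫ + if f p = 0 then ‖g p‖ else 0) ν := by
  refine .of_bound (((measurable_normalize.comp hf).inner hg).add (Measurable.ite
    (measurableSet_eq_fun hf measurable_const) hg.norm measurable_const)).aestronglyMeasurable
    (C + C) (Eventually.of_forall fun p => (norm_add_le _ _).trans (add_le_add ?_ ?_))
  · exact (norm_inner_le_norm _ _).trans
      ((mul_le_of_le_one_left (norm_nonneg _) (norm_normalize_le _)).trans (hgC p))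
  · split_ifs
    · simpa using hgC p
    · simpa using (norm_nonneg _).trans (hgC p)

/-- Symmetrizing under `(x, y) ↦ (y, x)` turns the derivative of the interaction term into
twice a single integral. -/
lemma integral_prod_inner_normalize_sub_le {φ : Euc d → Euc d} (hw : Measurable w)
    (hφ : Measurable φ) (hφ1 : ∀ x, ‖φ x‖ ≤ 1) :
    ∫ p, (⟪normalize (w p.1 - w p.2), φ p.1 - φ p.2⟫ +
        if w p.1 - w p.2 = 0 then ‖φ p.1 - φ p.2‖ else 0) ∂μ.prod μ ≤
      2 * ∫ x, (⟪meanDirection μ w x, φ x⟫ + clusterMass μ w x * ‖φ x‖) ∂μ := by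
  have hΔ : Measurable fun p : Euc d × Euc d => w p.1 - w p.2 :=
    (hw.comp measurable_fst).sub (hw.comp measurable_snd)
  have hb : ∀ p : Euc d × Euc d, ‖φ p.1 - φ p.2‖ ≤ 2 := fun p =>
    (norm_sub_le _ _).trans (by linarith [hφ1 p.1, hφ1 p.2])
  set e : Euc d × Euc d → ℝ := fun p =>
    ⟪normalize (w p.1 - w p.2), φ p.1⟫ + if w p.1 - w p.2 = 0 then ‖φ p.1‖ else 0
  have he : Integrable e (μ.prod μ) :=
    integrable_inner_normalize_add_ite hΔ (hφ.comp measurable_fst) (fun p => hφ1 p.1)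
  have hL := integrable_inner_normalize_add_ite (ν := μ.prod μ) hΔ
    ((hφ.comp measurable_fst).sub (hφ.comp measurable_snd)) hb
  have hpt : ∀ p : Euc d × Euc d, (⟪normalize (w p.1 - w p.2), φ p.1 - φ p.2⟫ +
      if w p.1 - w p.2 = 0 then ‖φ p.1 - φ p.2‖ else 0) ≤ e p + e p.swap := fun p => by
    simp only [e, Prod.fst_swap, Prod.snd_swap, ← neg_sub (w p.1), normalize_neg, neg_eq_zero,
      inner_neg_left, inner_sub_right]
    split_ifs
    · linarith [norm_sub_le (φ p.1) (φ p.2)]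
    · linarith
  calc _ ≤ ∫ p, (e p + e p.swap) ∂μ.prod μ := integral_mono hL (he.add he.swap) hpt
    _ = 2 * ∫ x, ∫ y, e (x, y) ∂μ ∂μ := by rw [integral_add_comp_swap he, integral_prod _ he]
    _ = _ := by simp_rw [e, integral_inner_normalize_sub_add_ite hw]

/-- The right derivative at `t = 0` of `J_{μ,λ}(w + t φ)`, computed by dominated convergence,
is nonnegative. -/
lemma IsSONMin.firstVariation_nonneg (hmin : IsSONMin μ lam w) (hw : Measurable w)
    (hid : MemLp (fun x => x) 2 μ) {φ : Euc d → Euc d} (hφ : AEStronglyMeasurable φ μ)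
    (hφ1 : ∀ x, ‖φ x‖ ≤ 1) :
    0 ≤ 2 * ∫ x, ⟪w x - x, φ x⟫ ∂μ + lam * ∫ p, (⟪normalize (w p.1 - w p.2), φ p.1 - φ p.2⟫ +
        if w p.1 - w p.2 = 0 then ‖φ p.1 - φ p.2‖ else 0) ∂μ.prod μ := by
  have hφ2 : MemLp φ 2 μ := .of_bound hφ 1 (Eventually.of_forall hφ1)
  have hφi : Integrable φ μ := hφ2.integrable one_le_two
  have hquot := (((tendsto_const_nhds (x := 2 * ∫ x, ⟪w x - x, φ x⟫ ∂μ)).add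
    ((tendsto_nhdsWithin_of_tendsto_nhds tendsto_id).mul_const (∫ x, ‖φ x‖ ^ 2 ∂μ))).add
    ((tendsto_integral_norm_add_smul_sub_div (μ := μ.prod μ) (f := fun p => w p.1 - w p.2)
      (g := fun p => φ p.1 - φ p.2)
      ((hw.comp measurable_fst).sub (hw.comp measurable_snd)).aestronglyMeasurable
      ((hφi.comp_fst μ).sub (hφi.comp_snd μ))).const_mul lam)).congr'
    (eventually_nhdsWithin_of_forall (s := Set.Ioi 0) fun t (ht : 0 < t) =>
      (SONJ_add_smul_sub_div (lam := lam) hmin.1 hid hφ hφ1 ht.ne').symm)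
  simpa only [id, zero_mul, add_zero] using ge_of_tendsto hquot
    (eventually_nhdsWithin_of_forall (s := Set.Ioi 0) fun t (ht : 0 < t) =>
      div_nonneg (sub_nonneg.mpr (hmin.2 _ (hmin.1.add (hφ2.const_smul t)))) ht.le)

lemma IsSONMin.integral_inner_le (hmin : IsSONMin μ lam w) (hlam : 0 ≤ lam)
    (hw : Measurable w) (hid : MemLp (fun x => x) 2 μ) {φ : Euc d → Euc d} (hφ : Measurable φ)
    (hφ1 : ∀ x, ‖φ x‖ ≤ 1) :
    ∫ x, ⟪x - w x - lam • meanDirection μ w x, φ x⟫ ∂μ ≤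
      ∫ x, lam * clusterMass μ w x * ‖φ x‖ ∂μ := by
  have hres : Integrable (fun x => -⟪w x - x, φ x⟫) μ :=
    (((hmin.1.sub hid).integrable one_le_two).inner_of_norm_le_one hφ.aestronglyMeasurable
      hφ1).neg
  have hFφ : Integrable (fun x => ⟪meanDirection μ w x, φ x⟫) μ :=
    (integrable_meanDirection hw).inner_of_norm_le_one hφ.aestronglyMeasurable hφ1
  have hmφ : Integrable (fun x => clusterMass μ w x * ‖φ x‖) μ :=
    (integrable_clusterMass hw).mul_norm_of_norm_le_one hφ.aestronglyMeasurable hφ1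
  have hvariation := hmin.firstVariation_nonneg hw hid hφ.aestronglyMeasurable hφ1
  have hsymm := integral_prod_inner_normalize_sub_le (μ := μ) hw hφ hφ1
  rw [integral_add hFφ hmφ] at hsymm
  have hpt : ∀ x, ⟪x - w x - lam • meanDirection μ w x, φ x⟫ =
      -⟪w x - x, φ x⟫ - lam * ⟪meanDirection μ w x, φ x⟫ := fun x => by
    rw [show x - w x - lam • meanDirection μ w x = -(w x - x) - lam • meanDirection μ w x by
      abel, inner_sub_left, inner_neg_left, real_inner_smul_left]
  simp_rw [hpt, mul_assoc]
  rw [integral_sub hres (hFφ.const_mul lam), integral_neg, integral_const_mul,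
    integral_const_mul]
  linarith [hvariation.trans (add_le_add le_rfl (mul_le_mul_of_nonneg_left hsymm hlam))]

lemma IsSONMin.ae_mem_closedBall (hmin : IsSONMin μ lam w) (hlam : 0 ≤ lam)
    (hw : Measurable w) (hid : MemLp (fun x => x) 2 μ) :
    ∀ᵐ x ∂μ, x ∈ closedBall (w x + lam • meanDirection μ w x) (lam * clusterMass μ w x) := by
  have hint : Integrable (fun x => x - w x - lam • meanDirection μ w x) μ :=
    ((hid.integrable one_le_two).sub (hmin.1.integrable one_le_two)).sub
      ((integrable_meanDirection hw).smul lam)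
  have hnorm : ∀ᵐ x ∂μ, ‖x - w x - lam • meanDirection μ w x‖ ≤ lam * clusterMass μ w x :=
    ae_norm_le_of_integral_inner_le hint
      ((measurable_id.sub hw).sub ((measurable_meanDirection hw).const_smul lam)).stronglyMeasurable
      ((integrable_clusterMass hw).const_mul lam)
      ((measurable_clusterMass hw).const_mul lam).stronglyMeasurable
      (fun x => mul_nonneg hlam (clusterMass_nonneg x))
      (fun φ hφ hφ1 => hmin.integral_inner_le hlam hw hid hφ.measurable hφ1)
  exact hnorm.mono fun x hx => mem_closedBall_iff_norm.mpr (by rwa [← sub_sub])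

end EulerLagrange

theorem stmt4_general
    (d : ℕ) (μ : Measure (Euc d)) [IsFiniteMeasure μ]
    (hsupp : ∃ K : Set (Euc d), IsCompact K ∧ μ Kᶜ = 0)
    (lam : ℝ) (hlam : 0 ≤ lam)
    (u : Euc d → Euc d) (hu : IsSONMin μ lam u) :
    ∃ A : Set (Euc d), MeasurableSet A ∧ μ Aᶜ = 0 ∧
      (∀ᵐ x ∂μ, (∃ y, Vset u x ∩ A = {y}) ∨ 0 < μ (Vset u x ∩ A)) ∧
      (∀ᵐ x ∂μ, ∀ᵐ z ∂μ, u x ≠ u z →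
        muCentroid μ (Vset u x ∩ A) ≠ muCentroid μ (Vset u z ∩ A)) := by
  obtain ⟨K, hK, hKc⟩ := hsupp
  obtain ⟨w, hws, huw⟩ := hu.1.aestronglyMeasurable
  have hw := hws.measurable
  obtain ⟨A, hA, hAm, hgood⟩ := (huw.and ((hu.congr_ae huw).ae_mem_closedBall hlam hw
    (memLp_id_of_isCompact hK hKc 2))).exists_measurable_mem
  have hAc : μ Aᶜ = 0 := mem_ae_iff.mp hA
  have hVset : ∀ x ∈ A, Vset u x ∩ A = Vset w x ∩ A := fun _ =>
    Vset_inter_eq_of_eqOn fun y hy => (hgood y hy).1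
  have hball := Vset_inter_subset_closedBall fun y hy => (hgood y hy).2
  have hregular := fun x (hx : x ∈ A) =>
    Vset_inter_eq_singleton_or_measure_pos hAc (fun y hy => (hgood y hy).2) hx
  refine ⟨A, hAm, hAc, ?_, ?_⟩
  · filter_upwards [hA] with x hx
    rw [hVset x hx]
    exact hregular x hx
  · filter_upwards [hA] with x hx
    filter_upwards [hA] with z hz
    intro hne
    rw [hVset x hx, hVset z hz]
    have hwne : w x ≠ w z := by rwa [← (hgood x hx).1, ← (hgood z hz).1]
    exact (disjoint_closedBall_of_ne hlam hw hwne).ne_of_mem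
      (muCentroid_mem_closedBall (hregular x hx) ((measurableSet_Vset hw x).inter hAm) (hball x))
      (muCentroid_mem_closedBall (hregular z hz) ((measurableSet_Vset hw z).inter hAm) (hball z))

/-- **Proposition (the minimizer is `μ`-regular).**  There is a Borel set `A` of full
`μ`-measure such that `μ`-a.e. cluster `V_{u_{μ,λ},x} ∩ A` is `μ`-regular (a singleton
or of positive measure), and distinct clusters have distinct `μ`-centroids. -/
theorem stmt4
    (d : ℕ) (μ : Measure (Euc d)) [IsFiniteMeasure μ] (hμ0 : μ ≠ 0)
    (hsupp : ∃ K : Set (Euc d), IsCompact K ∧ μ Kᶜ = 0)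
    (lam : ℝ) (hlam : 0 ≤ lam)
    (u : Euc d → Euc d) (hu : IsSONMin μ lam u) :
    ∃ A : Set (Euc d), MeasurableSet A ∧ μ Aᶜ = 0 ∧
      (∀ᵐ x ∂μ, (∃ y, Vset u x ∩ A = {y}) ∨ 0 < μ (Vset u x ∩ A)) ∧
      (∀ᵐ x ∂μ, ∀ᵐ z ∂μ, u x ≠ u z →
        muCentroid μ (Vset u x ∩ A) ≠ muCentroid μ (Vset u z ∩ A)) :=
  stmt4_general d μ hsupp lam hlam u hu
end
end

section
/- (Dual characterization of λ₁) Let μ be a nonzero finite Borel measure on ℝ^d with compact support. Then λ₁(μ) = μ(ℝ^d)^{-1} · min_{q ∈ Q(μ)} ‖q‖_{L^∞(μ⊗μ)}, where Q(μ) is the set of all q ∈ L^∞(μ⊗μ; ℝ^d) such that, for μ-a.e. x, y ∈ ℝ^d, q(x,y) = −q(y,x) and x − C_μ(ℝ^d) = ⨍ q(x,z) dμ(z); in particular the minimum over Q(μ) is attained. -/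
open MeasureTheory Filter Topology ProbabilityTheory
open scoped ENNReal NNReal symmDiff Classical RealInnerProductSpace

noncomputable section

/-- Membership in the dual feasible set `Q(μ)`: `q ∈ L^∞(μ⊗μ; ℝ^d)`, `q` is `μ⊗μ`-a.e.
antisymmetric, and `x - C_μ(ℝ^d) = ⨍ q(x,z) dμ(z)` for `μ`-a.e. `x`. -/
def QsetMem {d : ℕ} (μ : Measure (Euc d)) (q : Euc d → Euc d → Euc d) : Prop :=
  MemLp (fun p : Euc d × Euc d => q p.1 p.2) ⊤ (μ.prod μ) ∧
  (∀ᵐ p ∂μ.prod μ, q p.1 p.2 = -q p.2 p.1) ∧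
  (∀ᵐ x ∂μ, x - muCentroid μ Set.univ = ⨍ z, q x z ∂μ)


/-!
Expanding `J_{μ,λ}` around a constant `c` shows that `c` minimizes it iff
`2 ∫ ⟪x - c, w x⟫ dμ ≤ λ ∬ ‖w x - w y‖ dμ dμ` for every `w ∈ L²(μ)`. Constant test functions
force `c` to be the centroid, and the condition passes to the infimum over `λ`, so it holds at
`λ₁`. For `q ∈ Q(μ)`, antisymmetry gives `∬ ⟪q, w x - w y⟫ = 2 ∫ ⟪∫ q(x, ·), w x⟫`, which is
`2 μ(ℝ^d) ∫ ⟪x - c, w x⟫`; hence `λ₁ ≤ μ(ℝ^d)⁻¹ ‖q‖_∞`. Conversely, at `λ₁` the functional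
`(w x - w y) ↦ 2 ∫ ⟪x - c, w x⟫` is dominated by `λ₁ ‖·‖_{L¹(μ⊗μ)}`. Hahn–Banach extends it to
`L²(μ ⊗ μ)`, Riesz represents the extension by a kernel bounded by `λ₁`, and the antisymmetric
part of that kernel, multiplied by `μ(ℝ^d)`, is an element of `Q(μ)` attaining the bound.
-/

theorem LinearMap.exists_extension_comp_of_le_sublinear {E F : Type*} [AddCommGroup E]
    [Module ℝ E] [AddCommGroup F] [Module ℝ F] (T : E →ₗ[ℝ] F) (φ : E →ₗ[ℝ] ℝ) (N : F → ℝ)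
    (N_hom : ∀ c : ℝ, 0 < c → ∀ y, N (c • y) = c * N y) (N_add : ∀ y z, N (y + z) ≤ N y + N z)
    (hφ : ∀ x, φ x ≤ N (T x)) :
    ∃ g : F →ₗ[ℝ] ℝ, (∀ x, g (T x) = φ x) ∧ ∀ y, g y ≤ N y := by
  have N_zero : N 0 = 0 := by
    have := N_hom 2 two_pos 0
    rw [smul_zero] at this
    linarith
  have hker : LinearMap.ker T ≤ LinearMap.ker φ := fun x hx => by
    rw [LinearMap.mem_ker] at hx ⊢
    have h₁ := hφ x
    have h₂ := hφ (-x)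
    rw [hx, N_zero] at h₁
    rw [map_neg, map_neg, hx, neg_zero, N_zero] at h₂
    linarith
  let ψ : LinearMap.range T →ₗ[ℝ] ℝ :=
    (LinearMap.ker T).liftQ φ hker ∘ₗ T.quotKerEquivRange.symm.toLinearMap
  have hψ : ∀ x, ψ ⟨T x, LinearMap.mem_range_self T x⟩ = φ x := fun x => by
    simp [ψ, LinearMap.quotKerEquivRange_symm_apply_image]
  obtain ⟨g, hgψ, hgN⟩ := exists_extension_of_le_sublinear ⟨LinearMap.range T, ψ⟩ N N_hom N_add
    (by rintro ⟨_, x, rfl⟩; exact (hψ x).trans_le (hφ x))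
  exact ⟨g, fun x => (hgψ ⟨T x, _⟩).trans (hψ x), hgN⟩

theorem MeasureTheory.Lp.integral_norm_le_mul_norm {α E : Type*} [MeasurableSpace α]
    [NormedAddCommGroup E] {ν : Measure α} [IsFiniteMeasure ν] (h : Lp E 2 ν) :
    ∫ x, ‖h x‖ ∂ν ≤ (ν Set.univ ^ (1 / 2 : ℝ)).toReal * ‖h‖ := by
  have hle := eLpNorm_le_eLpNorm_mul_rpow_measure_univ (f := h) (μ := ν) one_le_two
    (Lp.aestronglyMeasurable h)
  norm_num at hle
  rw [← lpNorm_one_eq_integral_norm (Lp.aestronglyMeasurable h),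
    ← toReal_eLpNorm (Lp.aestronglyMeasurable h), Lp.norm_def, mul_comm, ← ENNReal.toReal_mul]
  exact ENNReal.toReal_mono (by finiteness) hle

section InnerIntegrals

variable {α E : Type*} [MeasurableSpace α] [NormedAddCommGroup E] [InnerProductSpace ℝ E]
  {ν : Measure α}

theorem MeasureTheory.AEStronglyMeasurable.integrable_inner_of_norm_le {f g : α → E} {C : ℝ}
    (hf : AEStronglyMeasurable f ν) (hfC : ∀ᵐ x ∂ν, ‖f x‖ ≤ C) (hg : Integrable g ν) :
    Integrable (fun x => ⟪f x, g x⟫) ν := by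
  refine (hg.norm.const_mul C).mono' (hf.inner hg.1) ?_
  filter_upwards [hfC] with x hx
  exact (norm_inner_le_norm _ _).trans (mul_le_mul_of_nonneg_right hx (norm_nonneg _))

theorem MeasureTheory.MemLp.integrable_inner {f g : α → E} (hf : MemLp f 2 ν)
    (hg : MemLp g 2 ν) : Integrable (fun x => ⟪f x, g x⟫) ν := by
  refine (L2.integrable_inner (𝕜 := ℝ) (hf.toLp f) (hg.toLp g)).congr ?_
  filter_upwards [hf.coeFn_toLp, hg.coeFn_toLp] with x hfx hgx
  rw [hfx, hgx]

theorem MeasureTheory.MemLp.ae_eq_zero_of_forall_integral_inner {B : α → E} (hB : MemLp B 2 ν)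
    (h : ∀ v : Lp E 2 ν, ∫ x, ⟪B x, v x⟫ ∂ν = 0) : B =ᵐ[ν] 0 := by
  have hzero : hB.toLp B = 0 := by
    rw [← inner_self_eq_zero (𝕜 := ℝ), L2.inner_def, ← h (hB.toLp B)]
    refine integral_congr_ae ?_
    filter_upwards [hB.coeFn_toLp] with x hx
    rw [hx]
  filter_upwards [hB.coeFn_toLp, Lp.coeFn_zero E 2 ν] with x hx h0
  rw [← hx, hzero, h0]

theorem MeasureTheory.Lp.ae_norm_le_of_inner_le [IsFiniteMeasure ν] (Q : Lp E 2 ν) {C : ℝ}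
    (hC : 0 ≤ C) (hQ : ∀ w : Lp E 2 ν, ⟪Q, w⟫ ≤ C * ∫ x, ‖w x‖ ∂ν) :
    ∀ᵐ x ∂ν, ‖Q x‖ ≤ C := by
  set A := {x | C < ‖Q x‖}
  have hA : MeasurableSet A :=
    measurableSet_lt measurable_const (Lp.stronglyMeasurable Q).norm.measurable
  have hw := (Lp.memLp Q).indicator hA
  have hinner : ⟪Q, hw.toLp _⟫ = ∫ x in A, ‖Q x‖ ^ 2 ∂ν := by
    rw [L2.inner_def, ← integral_indicator hA]
    refine integral_congr_ae ?_
    filter_upwards [hw.coeFn_toLp] with x hx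
    rw [hx]
    by_cases hxA : x ∈ A <;> simp [hxA]
  have hnorm : ∫ x, ‖(hw.toLp _ : Lp E 2 ν) x‖ ∂ν = ∫ x in A, ‖Q x‖ ∂ν := by
    rw [← integral_indicator hA]
    refine integral_congr_ae ?_
    filter_upwards [hw.coeFn_toLp] with x hx
    rw [hx]
    by_cases hxA : x ∈ A <;> simp [hxA]
  have hsq : IntegrableOn (fun x => ‖Q x‖ ^ 2) A ν :=
    ((Lp.memLp Q).integrable_norm_pow two_ne_zero).integrableOn
  have hlin : IntegrableOn (fun x => C * ‖Q x‖) A ν :=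
    (((Lp.memLp Q).integrable one_le_two).norm.const_mul C).integrableOn
  have hpos : ∀ x ∈ A, 0 < ‖Q x‖ ^ 2 - C * ‖Q x‖ := fun x (hx : C < ‖Q x‖) => by nlinarith
  have hzero : ∫ x in A, (‖Q x‖ ^ 2 - C * ‖Q x‖) ∂ν = 0 := by
    refine le_antisymm ?_ (setIntegral_nonneg hA fun x hx => (hpos x hx).le)
    rw [integral_sub hsq hlin, integral_const_mul, ← hinner, ← hnorm]
    exact sub_nonpos.2 (hQ _)
  have hnull := (setIntegral_eq_zero_iff_of_nonneg_ae
    ((ae_restrict_iff' hA).2 (ae_of_all _ fun x hx => (hpos x hx).le)) (hsq.sub hlin)).1 hzero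
  filter_upwards [(ae_restrict_iff' hA).1 hnull] with x hx
  by_contra hxA
  exact (hpos x (not_le.1 hxA)).ne' (hx (not_le.1 hxA))

variable {μ : Measure α}

theorem integral_inner_antisymmetrize [SFinite μ] {Q w : α × α → E}
    (hQ : Integrable (fun z => ⟪Q z, w z⟫) (μ.prod μ))
    (hQswap : Integrable (fun z => ⟪Q z.swap, w z⟫) (μ.prod μ)) (hw : ∀ z, w z.swap = -w z) :
    ∫ z, ⟪(2⁻¹ : ℝ) • (Q z - Q z.swap), w z⟫ ∂μ.prod μ = ∫ z, ⟪Q z, w z⟫ ∂μ.prod μ := by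
  have hswap : ∫ z, ⟪Q z.swap, w z⟫ ∂μ.prod μ = -∫ z, ⟪Q z, w z⟫ ∂μ.prod μ := by
    have h := integral_prod_swap (μ := μ) (ν := μ) (fun z => ⟪Q z, w z.swap⟫)
    simp only [Prod.swap_swap] at h
    rw [h, ← integral_neg]
    simp only [hw, inner_neg_right]
  simp only [real_inner_smul_left, inner_sub_left]
  rw [integral_const_mul, integral_sub hQ hQswap, hswap]
  ring

variable [IsFiniteMeasure μ] [CompleteSpace E]

theorem integral_inner_sub_eq_two_mul {q : α → α → E} {C : ℝ}
    (hq : AEStronglyMeasurable (Function.uncurry q) (μ.prod μ))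
    (hqC : ∀ᵐ z ∂μ.prod μ, ‖q z.1 z.2‖ ≤ C) (hanti : ∀ᵐ z ∂μ.prod μ, q z.1 z.2 = -q z.2 z.1)
    {v : α → E} (hv : Integrable v μ) :
    ∫ z, ⟪q z.1 z.2, v z.1 - v z.2⟫ ∂μ.prod μ = 2 * ∫ x, ⟪∫ y, q x y ∂μ, v x⟫ ∂μ := by
  have hfst : Integrable (fun z : α × α => ⟪q z.1 z.2, v z.1⟫) (μ.prod μ) :=
    hq.integrable_inner_of_norm_le hqC (hv.comp_fst μ)
  have hsnd : Integrable (fun z : α × α => ⟪q z.1 z.2, v z.2⟫) (μ.prod μ) :=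
    hq.integrable_inner_of_norm_le hqC (hv.comp_snd μ)
  have hswap : ∫ z, ⟪q z.1 z.2, v z.2⟫ ∂μ.prod μ = -∫ z, ⟪q z.1 z.2, v z.1⟫ ∂μ.prod μ := by
    rw [← integral_prod_swap, ← integral_neg]
    refine integral_congr_ae ?_
    filter_upwards [hanti] with z hz
    simp [hz, inner_neg_left]
  have hmarginal : ∫ z, ⟪q z.1 z.2, v z.1⟫ ∂μ.prod μ = ∫ x, ⟪∫ y, q x y ∂μ, v x⟫ ∂μ := by
    rw [integral_prod _ hfst]
    refine integral_congr_ae ?_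
    filter_upwards [hq.prodMk_left, Measure.ae_ae_of_ae_prod hqC] with x hqx hqCx
    have hint : Integrable (q x) μ := (integrable_const C).mono' hqx hqCx
    simpa only [real_inner_comm (v x)] using integral_inner hint (v x)
  simp only [inner_sub_right]
  rw [integral_sub hfst hsnd, hswap, hmarginal]
  ring

theorem two_integral_inner_le_of_antisymm {q : α → α → E} {f : α → E} {C : ℝ}
    (hq : AEStronglyMeasurable (Function.uncurry q) (μ.prod μ))
    (hqC : ∀ᵐ z ∂μ.prod μ, ‖q z.1 z.2‖ ≤ C) (hanti : ∀ᵐ z ∂μ.prod μ, q z.1 z.2 = -q z.2 z.1)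
    (hqf : ∀ᵐ x ∂μ, ∫ y, q x y ∂μ = f x) {v : α → E} (hv : Integrable v μ) :
    2 * ∫ x, ⟪f x, v x⟫ ∂μ ≤ C * ∫ x, ∫ y, ‖v x - v y‖ ∂μ ∂μ := by
  have hdiff : Integrable (fun z : α × α => v z.1 - v z.2) (μ.prod μ) :=
    (hv.comp_fst μ).sub (hv.comp_snd μ)
  calc 2 * ∫ x, ⟪f x, v x⟫ ∂μ = ∫ z, ⟪q z.1 z.2, v z.1 - v z.2⟫ ∂μ.prod μ := by
        rw [integral_inner_sub_eq_two_mul hq hqC hanti hv]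
        congr 1
        refine integral_congr_ae ?_
        filter_upwards [hqf] with x hx
        rw [hx]
    _ ≤ ∫ z, C * ‖v z.1 - v z.2‖ ∂μ.prod μ := by
        refine integral_mono_ae (hq.integrable_inner_of_norm_le hqC hdiff)
          (hdiff.norm.const_mul C) ?_
        filter_upwards [hqC] with z hz
        exact (real_inner_le_norm _ _).trans (mul_le_mul_of_nonneg_right hz (norm_nonneg _))
    _ = C * ∫ x, ∫ y, ‖v x - v y‖ ∂μ ∂μ := by
        rw [integral_const_mul, integral_prod _ hdiff.norm]

theorem ae_integral_eq_of_integral_inner_sub_eq {q : α → α → E} {f : α → E} {C : ℝ}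
    (hf : MemLp f 2 μ) (hq : AEStronglyMeasurable (Function.uncurry q) (μ.prod μ))
    (hqC : ∀ᵐ z ∂μ.prod μ, ‖q z.1 z.2‖ ≤ C) (hanti : ∀ᵐ z ∂μ.prod μ, q z.1 z.2 = -q z.2 z.1)
    (hrep : ∀ v : Lp E 2 μ,
      ∫ z, ⟪q z.1 z.2, v z.1 - v z.2⟫ ∂μ.prod μ = 2 * ∫ x, ⟪f x, v x⟫ ∂μ) :
    ∀ᵐ x ∂μ, ∫ y, q x y ∂μ = f x := by
  have hmarg : MemLp (fun x => ∫ y, q x y ∂μ) 2 μ := by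
    refine MemLp.of_bound hq.integral_prod_right' (C * μ.real Set.univ) ?_
    filter_upwards [Measure.ae_ae_of_ae_prod hqC] with x hx
    exact norm_integral_le_of_norm_le_const hx
  have horth : ∀ v : Lp E 2 μ, ∫ x, ⟪∫ y, q x y ∂μ - f x, v x⟫ ∂μ = 0 := fun v => by
    have h := hrep v
    rw [integral_inner_sub_eq_two_mul hq hqC hanti ((Lp.memLp v).integrable one_le_two)] at h
    simp only [inner_sub_left]
    rw [integral_sub (hmarg.integrable_inner (Lp.memLp v)) (hf.integrable_inner (Lp.memLp v))]
    linarith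
  filter_upwards [(hmarg.sub hf).ae_eq_zero_of_forall_integral_inner horth] with x hx
  exact sub_eq_zero.1 hx

end InnerIntegrals

section PairDiff

variable {α E : Type*} [MeasurableSpace α] [NormedAddCommGroup E] {μ : Measure α}

theorem ae_eq_pairDiff {v w : α → E} (h : v =ᵐ[μ] w) :
    (fun z : α × α => v z.1 - v z.2) =ᵐ[μ.prod μ] fun z => w z.1 - w z.2 := by
  filter_upwards [Measure.quasiMeasurePreserving_fst.ae h,
    Measure.quasiMeasurePreserving_snd.ae h] with z h₁ h₂
  rw [h₁, h₂]

variable [IsFiniteMeasure μ]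

theorem MeasureTheory.MemLp.pairDiff {p : ℝ≥0∞} {v : α → E} (hv : MemLp v p μ) :
    MemLp (fun z : α × α => v z.1 - v z.2) p (μ.prod μ) :=
  (hv.comp_fst μ).sub (hv.comp_snd μ)

variable [NormedSpace ℝ E]

variable (μ) in
def MeasureTheory.Lp.pairDiff : Lp E 2 μ →ₗ[ℝ] Lp E 2 (μ.prod μ) where
  toFun v := (Lp.memLp v).pairDiff.toLp _
  map_add' v w := by
    refine Lp.ext ?_
    filter_upwards [(Lp.memLp (v + w)).pairDiff.coeFn_toLp,
      Lp.coeFn_add ((Lp.memLp v).pairDiff.toLp _) ((Lp.memLp w).pairDiff.toLp _),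
      (Lp.memLp v).pairDiff.coeFn_toLp, (Lp.memLp w).pairDiff.coeFn_toLp,
      ae_eq_pairDiff (Lp.coeFn_add v w)] with z h h' hv hw hvw
    rw [h, h', Pi.add_apply, hv, hw, hvw, Pi.add_apply, Pi.add_apply]
    abel
  map_smul' c v := by
    refine Lp.ext ?_
    filter_upwards [(Lp.memLp (c • v)).pairDiff.coeFn_toLp,
      Lp.coeFn_smul c ((Lp.memLp v).pairDiff.toLp _), (Lp.memLp v).pairDiff.coeFn_toLp,
      ae_eq_pairDiff (Lp.coeFn_smul c v)] with z h h' hv hcv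
    rw [RingHom.id_apply, h, h', Pi.smul_apply, hv, hcv, Pi.smul_apply, Pi.smul_apply, smul_sub]

theorem MeasureTheory.Lp.coeFn_pairDiff (v : Lp E 2 μ) :
    Lp.pairDiff μ v =ᵐ[μ.prod μ] fun z => v z.1 - v z.2 :=
  (Lp.memLp v).pairDiff.coeFn_toLp

end PairDiff

section Duality

variable {α E : Type*} [MeasurableSpace α] [NormedAddCommGroup E] [InnerProductSpace ℝ E]
  [CompleteSpace E] {μ : Measure α} [IsFiniteMeasure μ]

theorem exists_Lp_inner_pairDiff_eq (F : Lp E 2 μ) {C : ℝ} (hC : 0 ≤ C)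
    (hF : ∀ v : Lp E 2 μ, 2 * ⟪F, v⟫ ≤ C * ∫ z, ‖Lp.pairDiff μ v z‖ ∂μ.prod μ) :
    ∃ Q : Lp E 2 (μ.prod μ), (∀ᵐ z ∂μ.prod μ, ‖Q z‖ ≤ C) ∧
      ∀ v : Lp E 2 μ, ⟪Q, Lp.pairDiff μ v⟫ = 2 * ⟪F, v⟫ := by
  set N : Lp E 2 (μ.prod μ) → ℝ := fun w => C * ∫ z, ‖w z‖ ∂μ.prod μ
  have hint : ∀ w : Lp E 2 (μ.prod μ), Integrable (fun z => ‖w z‖) (μ.prod μ) :=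
    fun w => ((Lp.memLp w).integrable one_le_two).norm
  have N_hom : ∀ c : ℝ, 0 < c → ∀ w, N (c • w) = c * N w := fun c hc w => by
    have : ∫ z, ‖(c • w) z‖ ∂μ.prod μ = c * ∫ z, ‖w z‖ ∂μ.prod μ := by
      rw [← integral_const_mul]
      refine integral_congr_ae ?_
      filter_upwards [Lp.coeFn_smul c w] with z hz
      rw [hz, Pi.smul_apply, norm_smul, Real.norm_of_nonneg hc.le]
    simp only [N, this]
    ring
  have N_add : ∀ w w', N (w + w') ≤ N w + N w' := fun w w' => by
    simp only [N, ← mul_add]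
    refine mul_le_mul_of_nonneg_left ?_ hC
    rw [← integral_add (hint w) (hint w')]
    refine integral_mono_ae (hint _) ((hint w).add (hint w')) ?_
    filter_upwards [Lp.coeFn_add w w'] with z hz
    rw [hz, Pi.add_apply]
    exact norm_add_le _ _
  have N_neg : ∀ w, N (-w) = N w := fun w => by
    simp only [N]
    refine congrArg _ (integral_congr_ae ?_)
    filter_upwards [Lp.coeFn_neg w] with z hz
    rw [hz, Pi.neg_apply, norm_neg]
  obtain ⟨g, hgT, hgN⟩ := (Lp.pairDiff μ).exists_extension_comp_of_le_sublinear
    ((2 : ℝ) • innerₗ _ F) N N_hom N_add (by simpa using hF)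
  have hg : ∀ w, ‖g w‖ ≤ C * (μ.prod μ Set.univ ^ (1 / 2 : ℝ)).toReal * ‖w‖ := fun w => by
    have hNw : N w ≤ C * (μ.prod μ Set.univ ^ (1 / 2 : ℝ)).toReal * ‖w‖ := by
      rw [mul_assoc]
      exact mul_le_mul_of_nonneg_left (Lp.integral_norm_le_mul_norm w) hC
    have := hgN (-w)
    rw [map_neg, N_neg] at this
    exact abs_le.2 ⟨by linarith, (hgN w).trans hNw⟩
  set Q := (InnerProductSpace.toDual ℝ _).symm (g.mkContinuous _ hg)
  have hQ : ∀ w, ⟪Q, w⟫ = g w := fun w => InnerProductSpace.toDual_symm_apply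
  refine ⟨Q, Lp.ae_norm_le_of_inner_le Q hC fun w => (hQ w).trans_le (hgN w), fun v => ?_⟩
  rw [hQ, hgT]
  simp

theorem exists_antisymm_of_two_integral_inner_le {f : α → E} (hf : MemLp f 2 μ) {C : ℝ}
    (hC : 0 ≤ C)
    (h : ∀ v : α → E, MemLp v 2 μ →
      2 * ∫ x, ⟪f x, v x⟫ ∂μ ≤ C * ∫ x, ∫ y, ‖v x - v y‖ ∂μ ∂μ) :
    ∃ q : α → α → E, AEStronglyMeasurable (Function.uncurry q) (μ.prod μ) ∧
      (∀ x y, q x y = -q y x) ∧ (∀ᵐ z ∂μ.prod μ, ‖q z.1 z.2‖ ≤ C) ∧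
      ∀ᵐ x ∂μ, ∫ y, q x y ∂μ = f x := by
  have hfv : ∀ v : Lp E 2 μ, ⟪hf.toLp f, v⟫ = ∫ x, ⟪f x, v x⟫ ∂μ := fun v => by
    rw [L2.inner_def]
    refine integral_congr_ae ?_
    filter_upwards [hf.coeFn_toLp] with x hx
    rw [hx]
  obtain ⟨Q, hQC, hQ⟩ := exists_Lp_inner_pairDiff_eq (hf.toLp f) hC fun v => by
    have hpair : ∫ z, ‖Lp.pairDiff μ v z‖ ∂μ.prod μ = ∫ x, ∫ y, ‖v x - v y‖ ∂μ ∂μ := by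
      rw [integral_integral ((Lp.memLp v).pairDiff.integrable one_le_two).norm]
      exact integral_congr_ae ((Lp.coeFn_pairDiff v).mono fun z hz => by simp only [hz])
    rw [hfv, hpair]
    exact h v (Lp.memLp v)
  set q : α → α → E := fun x y => (2⁻¹ : ℝ) • (Q (x, y) - Q (y, x))
  have hQswap : ∀ᵐ z ∂μ.prod μ, ‖Q z.swap‖ ≤ C :=
    Measure.measurePreserving_swap.quasiMeasurePreserving.ae hQC
  have hqm : AEStronglyMeasurable (Function.uncurry q) (μ.prod μ) :=
    ((Lp.stronglyMeasurable Q).sub ((Lp.stronglyMeasurable Q).comp_measurable measurable_swap)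
      |>.const_smul _).aestronglyMeasurable
  have hanti : ∀ x y, q x y = -q y x := fun x y => by
    simp only [q, ← smul_neg, neg_sub]
  have hqC : ∀ᵐ z ∂μ.prod μ, ‖q z.1 z.2‖ ≤ C := by
    filter_upwards [hQC, hQswap] with z h₁ h₂
    calc ‖q z.1 z.2‖ ≤ 2⁻¹ * (‖Q z‖ + ‖Q z.swap‖) := by
          rw [norm_smul, Real.norm_of_nonneg (by norm_num)]
          exact mul_le_mul_of_nonneg_left (norm_sub_le _ _) (by norm_num)
      _ ≤ C := by linarith
  refine ⟨q, hqm, hanti, hqC, ae_integral_eq_of_integral_inner_sub_eq hf hqm hqC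
    (ae_of_all _ fun z => hanti z.1 z.2) fun v => ?_⟩
  have hw := (Lp.memLp v).pairDiff (μ := μ)
  calc ∫ z, ⟪q z.1 z.2, v z.1 - v z.2⟫ ∂μ.prod μ = ∫ z, ⟪Q z, v z.1 - v z.2⟫ ∂μ.prod μ :=
        integral_inner_antisymmetrize ((Lp.memLp Q).integrable_inner hw)
          ((Lp.aestronglyMeasurable Q).comp_measurePreserving Measure.measurePreserving_swap
            |>.integrable_inner_of_norm_le hQswap (hw.integrable one_le_two))
          fun z => by simp only [Prod.fst_swap, Prod.snd_swap, neg_sub]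
    _ = ⟪Q, Lp.pairDiff μ v⟫ := by
        rw [L2.inner_def]
        refine integral_congr_ae ?_
        filter_upwards [Lp.coeFn_pairDiff v] with z hz
        rw [hz]
    _ = 2 * ∫ x, ⟪f x, v x⟫ ∂μ := by rw [hQ, hfv]

end Duality

section SumOfNorms

variable {d : ℕ} {μ : Measure (Euc d)}

theorem SONJ_congr {lam : ℝ} {u u' : Euc d → Euc d} (h : u =ᵐ[μ] u') :
    SONJ μ lam u = SONJ μ lam u' := by
  unfold SONJ
  congr 1
  · exact integral_congr_ae (h.mono fun x hx => by simp only [hx])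
  · refine congrArg _ (integral_congr_ae ?_)
    filter_upwards [h] with x hx
    exact integral_congr_ae (h.mono fun y hy => by simp only [hx, hy])

theorem lambda1_nonneg (hne : {lam : ℝ | 0 ≤ lam ∧ Cohesive μ lam}.Nonempty) :
    0 ≤ lambda1 μ :=
  le_csInf hne fun _ h => h.1

theorem muCentroid_univ [NeZero μ] : muCentroid μ Set.univ = ⨍ x, x ∂μ := by
  rw [muCentroid, if_pos (Measure.measure_univ_pos.2 (NeZero.ne μ)), Measure.restrict_univ,
    average_eq, measureReal_def]

variable [IsFiniteMeasure μ]

theorem SONJ_const_add (hμ2 : MemLp (fun x : Euc d => x) 2 μ) (lam : ℝ) (c : Euc d)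
    {w : Euc d → Euc d} (hw : MemLp w 2 μ) :
    SONJ μ lam (fun x => c + w x) = SONJ μ lam (fun _ => c) +
      (∫ x, ‖w x‖ ^ 2 ∂μ - 2 * ∫ x, ⟪x - c, w x⟫ ∂μ) +
      lam * ∫ x, ∫ y, ‖w x - w y‖ ∂μ ∂μ := by
  have hxc : MemLp (fun x => x - c) 2 μ := hμ2.sub (memLp_const c)
  have hsq : ∀ x, ‖c + w x - x‖ ^ 2 = ‖w x‖ ^ 2 - 2 * ⟪x - c, w x⟫ + ‖x - c‖ ^ 2 := fun x => by
    rw [real_inner_comm, ← norm_sub_sq_real, sub_sub_eq_add_sub, add_comm]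
  simp only [SONJ, hsq, add_sub_add_left_eq_sub, sub_self, norm_zero, integral_zero, mul_zero,
    add_zero, norm_sub_rev c]
  have hw2 : Integrable (fun x => ‖w x‖ ^ 2) μ := hw.integrable_norm_pow two_ne_zero
  have hinner : Integrable (fun x => 2 * ⟪x - c, w x⟫) μ := (hxc.integrable_inner hw).const_mul 2
  rw [integral_add (f := fun x => ‖w x‖ ^ 2 - 2 * ⟪x - c, w x⟫) (hw2.sub hinner)
      (hxc.integrable_norm_pow two_ne_zero), integral_sub hw2 hinner, integral_const_mul]
  ring

theorem isSONMin_const_iff (hμ2 : MemLp (fun x : Euc d => x) 2 μ) (lam : ℝ) (c : Euc d) :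
    IsSONMin μ lam (fun _ => c) ↔ ∀ w : Euc d → Euc d, MemLp w 2 μ →
      2 * ∫ x, ⟪x - c, w x⟫ ∂μ ≤ lam * ∫ x, ∫ y, ‖w x - w y‖ ∂μ ∂μ := by
  constructor
  · intro hmin w hw
    set B := ∫ x, ‖w x‖ ^ 2 ∂μ
    have hB : 0 ≤ B := integral_nonneg fun x => sq_nonneg _
    have hscaled : ∀ t : ℝ, 0 < t →
        2 * ∫ x, ⟪x - c, w x⟫ ∂μ ≤ lam * ∫ x, ∫ y, ‖w x - w y‖ ∂μ ∂μ + t * B := fun t ht => by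
      have h := hmin.2 (fun x => c + t • w x) ((memLp_const c).add (hw.const_smul t))
      rw [SONJ_const_add hμ2 lam c (w := fun x => t • w x) (hw.const_smul t)] at h
      simp only [real_inner_smul_right, norm_smul, ← smul_sub,
        Real.norm_of_nonneg ht.le, mul_pow, integral_const_mul] at h
      nlinarith
    refine le_of_forall_pos_le_add fun ε hε => (hscaled (ε / (B + 1)) (by positivity)).trans ?_
    gcongr
    rw [div_mul_eq_mul_div, div_le_iff₀ (by positivity)]
    nlinarith
  · intro h
    refine ⟨memLp_const c, fun v hv => ?_⟩
    have hw : MemLp (fun x => v x - c) 2 μ := hv.sub (memLp_const c)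
    have hv_eq : v = fun x => c + (v x - c) := funext fun x => (add_sub_cancel c (v x)).symm
    rw [hv_eq, SONJ_const_add hμ2 lam c hw]
    have hfirst := h _ hw
    have hsecond : 0 ≤ ∫ x, ‖v x - c‖ ^ 2 ∂μ := integral_nonneg fun x => sq_nonneg _
    linarith

theorem isSONMin_muCentroid_of_qsetMem (hμ2 : MemLp (fun x : Euc d => x) 2 μ)
    {q : Euc d → Euc d → Euc d} (hq : QsetMem μ q) :
    IsSONMin μ ((μ.real Set.univ)⁻¹ *
      (eLpNorm (fun p : Euc d × Euc d => q p.1 p.2) ⊤ (μ.prod μ)).toReal)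
      (fun _ => muCentroid μ Set.univ) := by
  obtain ⟨hqL, hanti, hmean⟩ := hq
  rw [isSONMin_const_iff hμ2]
  intro w hw
  refine two_integral_inner_le_of_antisymm (q := fun x y => (μ.real Set.univ)⁻¹ • q x y)
    (by exact hqL.1.const_smul (μ.real Set.univ)⁻¹) ?_ ?_ ?_ (hw.integrable one_le_two)
  · filter_upwards [ae_le_lpNorm_exponent_top hqL] with p hp
    rw [norm_smul, Real.norm_of_nonneg (by positivity), toReal_eLpNorm hqL.1]
    exact mul_le_mul_of_nonneg_left hp (by positivity)
  · filter_upwards [hanti] with p hp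
    rw [hp, smul_neg]
  · filter_upwards [hmean] with x hx
    rw [integral_smul, ← average_eq, hx]

variable [NeZero μ]

theorem eq_muCentroid_of_isSONMin_const (hμ2 : MemLp (fun x : Euc d => x) 2 μ) {lam : ℝ}
    {c : Euc d} (hmin : IsSONMin μ lam (fun _ => c)) : c = muCentroid μ Set.univ := by
  set k := muCentroid μ Set.univ - c
  have hxc : Integrable (fun x => x - c) μ := (hμ2.integrable one_le_two).sub (integrable_const c)
  have hinner : ∫ x, ⟪x - c, k⟫ ∂μ = μ.real Set.univ * ‖k‖ ^ 2 := by
    calc ∫ x, ⟪x - c, k⟫ ∂μ = ⟪k, ∫ x, (x - c) ∂μ⟫ := by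
          simp only [real_inner_comm k, integral_inner hxc k]
      _ = μ.real Set.univ * ‖k‖ ^ 2 := by
          rw [integral_sub (hμ2.integrable one_le_two) (integrable_const c), integral_const,
            ← measure_smul_average, ← smul_sub, real_inner_smul_right, ← muCentroid_univ,
            real_inner_self_eq_norm_sq]
  have h := (isSONMin_const_iff hμ2 lam c).1 hmin (fun _ => k) (memLp_const k)
  simp only [sub_self, norm_zero, integral_zero, mul_zero, hinner] at h
  have hk : ‖k‖ ^ 2 ≤ 0 := by nlinarith [measureReal_univ_pos (μ := μ)]
  have hk0 : k = 0 := by simpa using hk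
  exact (sub_eq_zero.1 hk0).symm

theorem mul_lambda1_le_of_qsetMem (hμ2 : MemLp (fun x : Euc d => x) 2 μ)
    {q : Euc d → Euc d → Euc d} (hq : QsetMem μ q) :
    μ.real Set.univ * lambda1 μ ≤
      (eLpNorm (fun p : Euc d × Euc d => q p.1 p.2) ⊤ (μ.prod μ)).toReal := by
  rw [← le_div_iff₀' measureReal_univ_pos, div_eq_inv_mul]
  exact csInf_le ⟨0, fun _ h => h.1⟩
    ⟨by positivity, _, isSONMin_muCentroid_of_qsetMem hμ2 hq, _, EventuallyEq.rfl⟩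

theorem Cohesive.isSONMin_muCentroid (hμ2 : MemLp (fun x : Euc d => x) 2 μ) {lam : ℝ}
    (h : Cohesive μ lam) : IsSONMin μ lam (fun _ => muCentroid μ Set.univ) := by
  obtain ⟨u, hu, c, huc⟩ := h
  have hc : IsSONMin μ lam (fun _ => c) :=
    ⟨memLp_const c, fun v hv => (SONJ_congr huc).symm.trans_le (hu.2 v hv)⟩
  rwa [← eq_muCentroid_of_isSONMin_const hμ2 hc]

theorem qsetMem_sub {R : ℝ} (hR : ∀ᵐ x ∂μ, ‖x‖ ≤ R) : QsetMem μ (fun x y => x - y) := by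
  refine ⟨memLp_top_of_bound (continuous_fst.sub continuous_snd).aestronglyMeasurable (R + R) ?_,
    ae_of_all _ fun p => (neg_sub _ _).symm, ae_of_all _ fun x => ?_⟩
  · filter_upwards [Measure.quasiMeasurePreserving_fst.ae hR,
      Measure.quasiMeasurePreserving_snd.ae hR] with p h₁ h₂
    exact (norm_sub_le _ _).trans (add_le_add h₁ h₂)
  · have hid : Integrable (fun z : Euc d => z) μ :=
      (MemLp.of_bound (p := 1) aestronglyMeasurable_id R hR).integrable le_rfl
    dsimp only
    rw [average_eq, integral_sub (integrable_const x) hid, integral_const, smul_sub,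
      inv_smul_smul₀ measureReal_univ_pos.ne', ← average_eq, muCentroid_univ]

theorem isSONMin_muCentroid_lambda1 (hμ2 : MemLp (fun x : Euc d => x) 2 μ)
    (hne : {lam : ℝ | 0 ≤ lam ∧ Cohesive μ lam}.Nonempty) :
    IsSONMin μ (lambda1 μ) (fun _ => muCentroid μ Set.univ) := by
  rw [isSONMin_const_iff hμ2]
  intro w hw
  have hle : ∀ lam ∈ {lam : ℝ | 0 ≤ lam ∧ Cohesive μ lam},
      2 * ∫ x, ⟪x - muCentroid μ Set.univ, w x⟫ ∂μ ≤ lam * ∫ x, ∫ y, ‖w x - w y‖ ∂μ ∂μ :=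
    fun lam hlam => (isSONMin_const_iff hμ2 _ _).1 (hlam.2.isSONMin_muCentroid hμ2) w hw
  have hD : 0 ≤ ∫ x, ∫ y, ‖w x - w y‖ ∂μ ∂μ :=
    integral_nonneg fun x => integral_nonneg fun y => norm_nonneg _
  rcases hD.eq_or_lt with hD | hD
  · obtain ⟨lam, hlam⟩ := hne
    simpa [← hD] using hle lam hlam
  · exact (div_le_iff₀ hD).1 (le_csInf hne fun lam hlam => (div_le_iff₀ hD).2 (hle lam hlam))

theorem exists_qsetMem_eLpNorm_le (hμ2 : MemLp (fun x : Euc d => x) 2 μ)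
    (hne : {lam : ℝ | 0 ≤ lam ∧ Cohesive μ lam}.Nonempty) :
    ∃ q : Euc d → Euc d → Euc d, QsetMem μ q ∧
      eLpNorm (fun p : Euc d × Euc d => q p.1 p.2) ⊤ (μ.prod μ) ≤
        ENNReal.ofReal (μ.real Set.univ * lambda1 μ) := by
  obtain ⟨q, hqm, hanti, hqC, hmarg⟩ := exists_antisymm_of_two_integral_inner_le
    (hμ2.sub (memLp_const _)) (lambda1_nonneg hne)
    ((isSONMin_const_iff hμ2 _ _).1 (isSONMin_muCentroid_lambda1 hμ2 hne))
  have hM : 0 < μ.real Set.univ := measureReal_univ_pos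
  have hbound : ∀ᵐ p ∂μ.prod μ, ‖μ.real Set.univ • q p.1 p.2‖ ≤ μ.real Set.univ * lambda1 μ := by
    filter_upwards [hqC] with p hp
    rw [norm_smul, Real.norm_of_nonneg hM.le]
    exact mul_le_mul_of_nonneg_left hp hM.le
  have hqm' : AEStronglyMeasurable (fun p : Euc d × Euc d => μ.real Set.univ • q p.1 p.2)
      (μ.prod μ) := hqm.const_smul (μ.real Set.univ)
  refine ⟨fun x y => μ.real Set.univ • q x y,
    ⟨memLp_top_of_bound hqm' _ hbound, ae_of_all _ fun p => ?_, ?_⟩, ?_⟩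
  · dsimp only
    rw [hanti, smul_neg]
  · filter_upwards [hmarg] with x hx
    rw [average_eq, integral_smul, inv_smul_smul₀ hM.ne', hx, Pi.sub_apply]
  · rw [eLpNorm_exponent_top]
    exact eLpNormEssSup_le_of_ae_bound hbound

end SumOfNorms

/-- **Theorem (dual characterization of `λ₁`).**
`λ₁(μ) = μ(ℝ^d)⁻¹ · min_{q ∈ Q(μ)} ‖q‖_{L^∞(μ⊗μ)}`, the minimum being attained. -/
theorem stmt7
    (d : ℕ) (μ : Measure (Euc d)) [IsFiniteMeasure μ] (hμ0 : μ ≠ 0)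
    (hsupp : ∃ K : Set (Euc d), IsCompact K ∧ μ Kᶜ = 0) :
    ∃ q : Euc d → Euc d → Euc d, QsetMem μ q ∧
      lambda1 μ = (μ Set.univ).toReal⁻¹ *
        (eLpNorm (fun p : Euc d × Euc d => q p.1 p.2) ⊤ (μ.prod μ)).toReal ∧
      ∀ q' : Euc d → Euc d → Euc d, QsetMem μ q' →
        eLpNorm (fun p : Euc d × Euc d => q p.1 p.2) ⊤ (μ.prod μ) ≤
          eLpNorm (fun p : Euc d × Euc d => q' p.1 p.2) ⊤ (μ.prod μ) := by
  have : NeZero μ := ⟨hμ0⟩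
  obtain ⟨K, hK, hKc⟩ := hsupp
  obtain ⟨R, hKR⟩ := hK.isBounded.subset_closedBall 0
  have hR : ∀ᵐ x ∂μ, ‖x‖ ≤ R := by
    filter_upwards [measure_eq_zero_iff_ae_notMem.1 hKc] with x hx
    simpa using hKR (not_not.1 hx)
  have hμ2 : MemLp (fun x : Euc d => x) 2 μ := MemLp.of_bound aestronglyMeasurable_id R hR
  have hne : {lam : ℝ | 0 ≤ lam ∧ Cohesive μ lam}.Nonempty :=
    ⟨_, by positivity, _, isSONMin_muCentroid_of_qsetMem hμ2 (qsetMem_sub hR), _, EventuallyEq.rfl⟩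
  obtain ⟨q, hq, hqle⟩ := exists_qsetMem_eLpNorm_le hμ2 hne
  have hnorm : (eLpNorm (fun p : Euc d × Euc d => q p.1 p.2) ⊤ (μ.prod μ)).toReal =
      μ.real Set.univ * lambda1 μ :=
    le_antisymm
      (ENNReal.toReal_le_of_le_ofReal (mul_nonneg measureReal_nonneg (lambda1_nonneg hne)) hqle)
      (mul_lambda1_le_of_qsetMem hμ2 hq)
  refine ⟨q, hq, ?_, fun q' hq' => hqle.trans ?_⟩
  · rw [← measureReal_def, hnorm, inv_mul_cancel_left₀ measureReal_univ_pos.ne']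
  · rw [← ENNReal.ofReal_toReal hq'.1.2.ne]
    exact ENNReal.ofReal_le_ofReal (mul_lambda1_le_of_qsetMem hμ2 hq')
end
end
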